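/- (Stackelberg, monotone increasing case.) If (ln τ)·(k0 − k1) ≥ 0 and k0 + k1 < 0, then r is strictly increasing on (0, ∞). -/

import Mathlib

/-!
Since `Q' = -φ` and `(ζ (±L/d + d/2))² / 2 = (L²/d² + d²/4) / 2 ± L/2` for `ζ² = 1`, the two
Gaussian terms of `r'(d)` share the positive factor `φ(√(L²/d² + d²/4))`, and the leftover factors
`e^{∓L/2} = τ^{∓1/2}` turn the coefficients into `k0` and `k1`:
`r'(d) = -φ(…) · ((k0 + k1)/2 + (k1 - k0) L / d²)` with `L = ln τ`.
Both summands in the bracket are nonpositive and the first is negative, so `r' > 0`.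
-/

/-- The Gaussian Q-function `Q(x) = (1/√(2π)) ∫_x^∞ exp(−t²/2) dt`. -/
noncomputable def gaussQ (x : ℝ) : ℝ :=
  (Real.sqrt (2 * Real.pi))⁻¹ * ∫ t in Set.Ioi x, Real.exp (-(t ^ 2 / 2))

open Real Set MeasureTheory

theorem hasDerivAt_integral_Ioi {E : Type*} [NormedAddCommGroup E] [NormedSpace ℝ E]
    [CompleteSpace E] {f : ℝ → E} (hf : Integrable f) (hf_cont : Continuous f) (x : ℝ) :
    HasDerivAt (fun a ↦ ∫ t in Ioi a, f t) (-f x) x := by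
  have h : (fun a ↦ ∫ t in Ioi a, f t) = fun a ↦ (∫ t in Ioi 0, f t) - ∫ t in (0)..a, f t :=
    funext fun a ↦ eq_sub_of_add_eq'
      (intervalIntegral.integral_interval_add_Ioi hf.integrableOn hf.integrableOn)
  rw [h]
  simpa using ((hf_cont.integral_hasStrictDerivAt 0 x).hasDerivAt.const_sub _)

theorem integrable_exp_neg_sq_div_two : Integrable fun t : ℝ ↦ exp (-(t ^ 2 / 2)) := by
  simpa only [neg_mul, one_div, ← div_eq_inv_mul] using
    integrable_exp_neg_mul_sq (by norm_num : (0 : ℝ) < 1 / 2)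

theorem hasDerivAt_gaussQ (x : ℝ) :
    HasDerivAt gaussQ (-((√(2 * π))⁻¹ * exp (-(x ^ 2 / 2)))) x := by
  rw [← mul_neg]
  exact (hasDerivAt_integral_Ioi integrable_exp_neg_sq_div_two (by fun_prop) x).const_mul _

theorem hasDerivAt_gaussQ_comp {ζ L d : ℝ} (hζ : ζ ^ 2 = 1) (hd : d ≠ 0) :
    HasDerivAt (fun t ↦ gaussQ (ζ * (L / t + t / 2)))
      (-((√(2 * π))⁻¹ * exp (-((L ^ 2 / d ^ 2 + d ^ 2 / 4) / 2))) *
        (ζ * exp (-(L / 2)) * (1 / 2 - L / d ^ 2))) d := by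
  have h_inner : HasDerivAt (fun t ↦ ζ * (L / t + t / 2)) (ζ * (1 / 2 - L / d ^ 2)) d := by
    refine ((((hasDerivAt_inv hd).const_mul L).add ((hasDerivAt_id d).div_const 2)).const_mul
      ζ).congr_deriv ?_
    field_simp
    ring
  have h_sq : (ζ * (L / d + d / 2)) ^ 2 / 2 = (L ^ 2 / d ^ 2 + d ^ 2 / 4) / 2 + L / 2 := by
    rw [mul_pow, hζ, one_mul]
    field_simp
    ring
  refine ((hasDerivAt_gaussQ _).comp d h_inner).congr_deriv ?_
  rw [h_sq, neg_add, exp_add]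
  ring

theorem hasDerivAt_gaussQ_risk {a₀ a₁ b ζ L d : ℝ} (hζ : ζ ^ 2 = 1) (hd : d ≠ 0) :
    HasDerivAt
      (fun t ↦ b + a₀ * gaussQ (ζ * (L / t + t / 2)) + a₁ * gaussQ (ζ * (-L / t + t / 2)))
      (-((√(2 * π))⁻¹ * exp (-((L ^ 2 / d ^ 2 + d ^ 2 / 4) / 2))) *
        (a₀ * ζ * exp (-(L / 2)) * (1 / 2 - L / d ^ 2) +
          a₁ * ζ * exp (L / 2) * (1 / 2 + L / d ^ 2))) d := by
  have h₀ := hasDerivAt_gaussQ_comp (L := L) hζ hd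
  have h₁ := hasDerivAt_gaussQ_comp (L := -L) hζ hd
  refine (((hasDerivAt_const d b).add (h₀.const_mul a₀)).add (h₁.const_mul a₁)).congr_deriv ?_
  rw [neg_sq, neg_div, neg_neg]
  ring

theorem stmt_8_general (π0 π1 C00 C01 C10 C11 τ ζ : ℝ)
    (hτ : 0 < τ) (hζ : ζ = 1 ∨ ζ = -1)
    (k0 k1 : ℝ)
    (hk0 : k0 = π0 * ζ * (C10 - C00) * τ ^ (-(1 / 2) : ℝ))
    (hk1 : k1 = π1 * ζ * (C01 - C11) * τ ^ ((1 / 2) : ℝ))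
    (r : ℝ → ℝ)
    (hr : r = fun d : ℝ => π0 * C00 + π1 * C11
        + π0 * (C10 - C00) * gaussQ (ζ * (Real.log τ / d + d / 2))
        + π1 * (C01 - C11) * gaussQ (ζ * (-Real.log τ / d + d / 2)))
    (hcase1 : 0 ≤ Real.log τ * (k0 - k1)) (hcase2 : k0 + k1 < 0) :
    StrictMonoOn r (Set.Ioi (0 : ℝ)) := by
  have hζ_sq : ζ ^ 2 = 1 := by rcases hζ with rfl | rfl <;> norm_num
  have hk0' : k0 = π0 * (C10 - C00) * ζ * exp (-(log τ / 2)) := by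
    rw [hk0, rpow_def_of_pos hτ]
    ring_nf
  have hk1' : k1 = π1 * (C01 - C11) * ζ * exp (log τ / 2) := by
    rw [hk1, rpow_def_of_pos hτ]
    ring_nf
  have h_deriv : ∀ d ∈ Ioi (0 : ℝ), HasDerivAt r
      (-((√(2 * π))⁻¹ * exp (-((log τ ^ 2 / d ^ 2 + d ^ 2 / 4) / 2))) *
        ((k0 + k1) / 2 + (k1 - k0) * log τ / d ^ 2)) d := fun d hd ↦ by
    rw [hr]
    exact (hasDerivAt_gaussQ_risk hζ_sq (ne_of_gt hd)).congr_deriv (by rw [hk0', hk1']; ring)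
  refine strictMonoOn_of_hasDerivWithinAt_pos (convex_Ioi 0)
    (fun d hd ↦ (h_deriv d hd).continuousAt.continuousWithinAt)
    (fun d hd ↦ (h_deriv d (interior_subset hd)).hasDerivWithinAt) fun d hd ↦ ?_
  have h_slope : (k1 - k0) * log τ / d ^ 2 ≤ 0 :=
    div_nonpos_of_nonpos_of_nonneg (by linarith) (sq_nonneg d)
  exact mul_pos_of_neg_of_neg (neg_neg_of_pos (by positivity)) (by linarith)

/-- Stackelberg, monotone increasing case: if `(ln τ)·(k0 − k1) ≥ 0` and
`k0 + k1 < 0`, the transmitter Bayes risk is strictly increasing on `(0, ∞)`. -/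
theorem stmt_8 (π0 π1 C00 C01 C10 C11 τ ζ : ℝ)
    (hπ0 : 0 < π0) (hπ1 : 0 < π1) (hτ : 0 < τ) (hζ : ζ = 1 ∨ ζ = -1)
    (k0 k1 : ℝ)
    (hk0 : k0 = π0 * ζ * (C10 - C00) * τ ^ (-(1 / 2) : ℝ))
    (hk1 : k1 = π1 * ζ * (C01 - C11) * τ ^ ((1 / 2) : ℝ))
    (r : ℝ → ℝ)
    (hr : r = fun d : ℝ => π0 * C00 + π1 * C11
        + π0 * (C10 - C00) * gaussQ (ζ * (Real.log τ / d + d / 2))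
        + π1 * (C01 - C11) * gaussQ (ζ * (-Real.log τ / d + d / 2)))
    (hcase1 : 0 ≤ Real.log τ * (k0 - k1)) (hcase2 : k0 + k1 < 0) :
    StrictMonoOn r (Set.Ioi (0 : ℝ)) :=
  stmt_8_general π0 π1 C00 C01 C10 C11 τ ζ hτ hζ k0 k1 hk0 hk1 r hr hcase1 hcase2
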